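/- Fix k ≥ 2 and a simple k-power w_1 of length n. Define w_{i+1} = cyc_0(w_i) a_i cyc_{n^{i-1}}(w_i) a_i ⋯ cyc_{(n-1)n^{i-1}}(w_i) a_i, with a_i a fresh letter not occurring in w_i. Then for every i ≥ 1, w_i is a simple k-power. -/

import Mathlib

/-- `p^k`: the word `p` concatenated `k` times. -/
def listPow {α : Type*} (p : List α) (k : ℕ) : List α := (List.replicate k p).flatten

/-- A `k`-power is a nonempty word of the form `p^k`. -/
def IsKPower {α : Type*} (k : ℕ) (w : List α) : Prop := ∃ p : List α, p ≠ [] ∧ w = listPow p k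

/-- A simple `k`-power: a `k`-power none of whose proper factors is a `k`-power. -/
def SimpleKPower {α : Type*} (k : ℕ) (w : List α) : Prop :=
  IsKPower k w ∧ ∀ y : List α, y <:+: w → y ≠ w → ¬ IsKPower k y

/-- The `i`-th partial conjugate: shift left cyclically by `i`, then drop the last symbol. -/
def cyc {α : Type*} (i : ℕ) (w : List α) : List α := (w.rotate i).dropLast

/-- The recursive construction: `wrec w1 a n i` is the word `w_{i+1}` of the paper, i.e.
`wrec w1 a n 0 = w_1` and
`w_{i+1} = cyc_0(w_i) a_i cyc_{n^{i-1}}(w_i) a_i ⋯ cyc_{(n-1)n^{i-1}}(w_i) a_i`. -/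
def wrec {α : Type*} (w1 : List α) (a : ℕ → α) (n : ℕ) : ℕ → List α
  | 0 => w1
  | i + 1 => (List.ofFn fun j : Fin n => cyc (j.val * n ^ i) (wrec w1 a n i) ++ [a (i + 1)]).flatten

/-!
A simple `k`-power `w = p ^ k` is encoded by its periodic extension `f x = w[x mod |p|]?`: `w` is
simple iff `f` contains no `k`-power of period below `|p|` anywhere, since a `k`-power crossing the
boundary of `w` can be moved back inside (this is why conjugates of simple `k`-powers are simple).
The word `w_{i+1}` is a prefix of an infinite word `H` made of blocks of length `m = |w_i|`, the
`j`-th one reading `f` from `j * n ^ (i - 1)` and ending with the fresh letter `A`; `H` has period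
`m * |p₁|` where `w_1 = p₁ ^ k`. A `k`-power of smaller period `d` in `H` either avoids `A`, and then
lies in a single block, i.e. in a conjugate of `w_i`; or it contains `A`, which forces `d = c * m`,
and then `f` gets the period `c * n ^ (i - 1) < |p|`, hence the period `gcd (c * n ^ (i - 1), |p|)`,
which puts a shorter `k`-power inside `w_i`.
-/

open Function

section

variable {α : Type*}

def PeriodicOn (f : ℕ → α) (d s len : ℕ) : Prop :=
  ∀ i, i + d < len → f (s + i + d) = f (s + i)

namespace PeriodicOn

variable {f g : ℕ → α} {d s len : ℕ}

theorem congr (h : PeriodicOn f d s len) (hfg : ∀ i < len, f (s + i) = g (s + i)) :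
    PeriodicOn g d s len := fun i hi => by
  rw [← hfg i (by omega), add_assoc, ← hfg (i + d) hi, ← add_assoc, h i hi]

end PeriodicOn

namespace Function.Periodic

variable {f : ℕ → α} {q : ℕ}

theorem periodicOn_mod (hf : Periodic f q) {d s len : ℕ} (h : PeriodicOn f d s len) :
    PeriodicOn f d (s % q) len := by
  have hmod : ∀ i, f (s % q + i) = f (s + i) := fun i => by
    rw [← hf.map_mod_nat, Nat.mod_add_mod, hf.map_mod_nat]
  intro i hi
  rw [hmod, add_assoc, hmod, ← add_assoc, h i hi]

theorem nat_gcd {a b : ℕ} (ha : Periodic f a) (hb : Periodic f b) : Periodic f (a.gcd b) := by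
  induction a, b using Nat.gcd.induction with
  | H0 b => simpa using hb
  | H1 a b _ ih =>
    rw [Nat.gcd_rec]
    refine ih (fun x => ?_) ha
    have := (ha.nat_mul (b / a)) (x + b % a)
    rw [Nat.cast_id, add_assoc, Nat.mod_add_div' b a, hb] at this
    exact this.symm

theorem of_forall_lt (hf : Periodic f q) (hq : 0 < q) {a r : ℕ}
    (h : ∀ i < q, f (a + i + r) = f (a + i)) : Periodic f r := by
  intro x
  obtain ⟨i, hi, hx⟩ : ∃ i < q, a + i ≡ x [MOD q] := by
    refine ⟨(x + a * (q - 1)) % q, Nat.mod_lt _ hq, ?_⟩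
    have hqa : a + a * (q - 1) = q * a := by
      rw [Nat.mul_sub_one, mul_comm q a]; have := Nat.le_mul_of_pos_right a hq; omega
    rw [Nat.ModEq, Nat.add_mod_mod, ← add_assoc, add_comm a x, add_assoc, hqa,
      Nat.add_mul_mod_self_left]
  calc f (x + r) = f (a + i + r) := by
        rw [← hf.map_mod_nat, ← hx.add_right r, hf.map_mod_nat]
    _ = f (a + i) := h i hi
    _ = f x := by rw [← hf.map_mod_nat, hx, hf.map_mod_nat]

end Function.Periodic

def KPowerFreeBelow (k q : ℕ) (f : ℕ → α) : Prop :=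
  ∀ s d, 0 < d → d < q → ¬PeriodicOn f d s (k * d)

/-- A `k`-power of period `d` that does not fit into `[0, k * q)` sticks out by more than
`k * (q - d)`, so shifting by `d` and using period `q` gives one of period `q - d` that does. -/
theorem kPowerFreeBelow_of_window {k q : ℕ} {f : ℕ → α} (hk : 2 ≤ k) (hf : Periodic f q)
    (h : ∀ s d, 0 < d → d < q → s + k * d ≤ k * q → ¬PeriodicOn f d s (k * d)) :
    KPowerFreeBelow k q f := by
  intro s d hd hdq hper
  replace hper := hf.periodicOn_mod hper
  have hs : s % q < q := Nat.mod_lt _ (by omega)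
  by_cases hfit : s % q + k * d ≤ k * q
  · exact h _ d hd hdq hfit hper
  set e := q - d
  have hqe : k * q = k * d + k * e := by rw [← Nat.mul_add]; congr; omega
  have hke : k * e < q := by omega
  have h2 : 2 * d ≤ k * d ∧ 2 * q ≤ k * q := ⟨Nat.mul_le_mul_right _ hk, Nat.mul_le_mul_right _ hk⟩
  refine h ((s % q + d) % q) e (by omega) (by omega) ?_ (hf.periodicOn_mod fun i hi => ?_)
  · have := Nat.mod_lt (s % q + d) (show 0 < q by omega)
    omega
  · calc f (s % q + d + i + e) = f (s % q + i + q) := by congr 1; omega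
      _ = f (s % q + i + d) := by rw [hf, hper i (by omega)]
      _ = f (s % q + d + i) := by congr 1; omega

theorem KPowerFreeBelow.not_periodic {k q r : ℕ} {f : ℕ → α} (hfree : KPowerFreeBelow k q f)
    (hf : Periodic f q) (hr : 0 < r) (hrq : r < q) : ¬Periodic f r := fun hfr =>
  hfree 0 (r.gcd q) (Nat.gcd_pos_of_pos_left _ hr) ((Nat.gcd_le_left _ hr).trans_lt hrq)
    fun _ _ => (hfr.nat_gcd hf) _

namespace List

theorem length_flatten_ofFn {n m : ℕ} {B : Fin n → List α} (hB : ∀ j, (B j).length = m) :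
    (ofFn B).flatten.length = n * m := by
  simp [length_flatten, Function.comp_def, hB]

theorem getElem?_flatten_ofFn {n m : ℕ} {B : Fin n → List α} (hB : ∀ j, (B j).length = m)
    {x : ℕ} (hx : x < n * m) :
    (ofFn B).flatten[x]? = (B ⟨x / m, Nat.div_lt_of_lt_mul (by rwa [mul_comm])⟩)[x % m]? := by
  induction n generalizing x with
  | zero => simp at hx
  | succ n ih =>
    rw [ofFn_succ, flatten_cons]
    rcases lt_or_ge x m with hxm | hxm
    · rw [getElem?_append_left (by rwa [hB]), Nat.mod_eq_of_lt hxm]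
      congr
      simp [Nat.div_eq_of_lt hxm]
    · obtain ⟨y, rfl⟩ := Nat.exists_eq_add_of_le' hxm
      rw [getElem?_append_right (by rw [hB]; omega), hB, Nat.add_sub_cancel,
        ih (fun j => hB j.succ) (by rw [Nat.succ_mul] at hx; omega), Nat.add_mod_right]
      have hm : 0 < m := Nat.pos_of_ne_zero (by rintro rfl; simp at hx)
      congr
      ext
      simp only [Fin.val_succ, Nat.add_div_right _ hm]

end List

theorem length_listPow (p : List α) (k : ℕ) : (listPow p k).length = k * p.length := by
  simp [listPow]

theorem getElem?_listPow (p : List α) {k i : ℕ} (hi : i < k * p.length) :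
    (listPow p k)[i]? = p[i % p.length]? := by
  rw [listPow, ← List.ofFn_const, List.getElem?_flatten_ofFn (fun _ => rfl) hi]

theorem getElem?_cyc (w : List α) (r : ℕ) {l : ℕ} (hl : l < w.length - 1) :
    (cyc r w)[l]? = w[(l + r) % w.length]? := by
  rw [cyc, List.getElem?_dropLast, List.length_rotate, if_pos hl,
    List.getElem?_rotate (by omega)]

theorem length_cyc (w : List α) (r : ℕ) : (cyc r w).length = w.length - 1 := by
  rw [cyc, List.length_dropLast, List.length_rotate]

theorem isKPower_iff {k : ℕ} (hk : 0 < k) {w : List α} :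
    IsKPower k w ↔ ∃ q, 0 < q ∧ w.length = k * q ∧ w.HasPeriod q := by
  simp_rw [List.hasPeriod_iff_forall_getElem?_mod]
  constructor
  · rintro ⟨p, hp, rfl⟩
    refine ⟨p.length, List.length_pos_iff.2 hp, length_listPow p k, fun i hi => ?_⟩
    rw [length_listPow] at hi
    have hmod : i % p.length < k * p.length :=
      (Nat.mod_lt _ (List.length_pos_iff.2 hp)).trans_le (Nat.le_mul_of_pos_left _ hk)
    rw [getElem?_listPow p hi, getElem?_listPow p hmod, Nat.mod_mod]
  · rintro ⟨q, hq, hlen, hper⟩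
    have hq' : (w.take q).length = q := by
      rw [List.length_take, hlen]; exact min_eq_left (Nat.le_mul_of_pos_left _ hk)
    refine ⟨w.take q, List.ne_nil_of_length_pos (by omega), List.ext_getElem? fun i => ?_⟩
    rcases lt_or_ge i (k * q) with hi | hi
    · rw [hper i (by omega), getElem?_listPow _ (by rwa [hq']), hq', List.getElem?_take,
        if_pos (Nat.mod_lt _ hq)]
    · rw [List.getElem?_eq_none (by omega),
        List.getElem?_eq_none (by rw [length_listPow, hq']; omega)]

theorem simpleKPower_iff {k q : ℕ} (hk : 0 < k) (hq : 0 < q) {w : List α}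
    (hlen : w.length = k * q) :
    SimpleKPower k w ↔ w.HasPeriod q ∧
      ∀ s d, 0 < d → d < q → s + k * d ≤ k * q → ¬PeriodicOn (w[·]?) d s (k * d) := by
  constructor
  · rintro ⟨hpow, hsimple⟩
    obtain ⟨q', hq', hlen', hper⟩ := (isKPower_iff hk).1 hpow
    obtain rfl : q = q' := Nat.eq_of_mul_eq_mul_left hk (hlen ▸ hlen')
    refine ⟨hper, fun s d hd hdq hfit hperOn => hsimple ((w.drop s).take (k * d))
      ((List.take_prefix _ _).isInfix.trans (List.drop_suffix _ _).isInfix) ?_ ?_⟩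
    · have : k * d < k * q := Nat.mul_lt_mul_of_pos_left hdq hk
      exact fun h => by have := congrArg List.length h; simp only [List.length_take, List.length_drop] at this; omega
    · refine (isKPower_iff hk).2 ⟨d, hd, by simp only [List.length_take, List.length_drop]; omega,
        List.hasPeriod_iff_getElem?.2 ?_⟩
      intro i hi
      simp only [List.length_take, List.length_drop] at hi
      simp only [List.getElem?_take, List.getElem?_drop]
      have := hperOn i (by omega)
      dsimp only at this
      rw [if_pos (by omega), if_pos (by omega), ← add_assoc, this]
  · rintro ⟨hper, hwin⟩
    refine ⟨(isKPower_iff hk).2 ⟨q, hq, hlen, hper⟩, fun y hy hne hyk => ?_⟩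
    obtain ⟨d, hd, hylen, hyper⟩ := (isKPower_iff hk).1 hyk
    obtain ⟨s, hs, hys⟩ := List.infix_iff_getElem?.1 hy
    have hylt : y.length < w.length :=
      lt_of_le_of_ne hy.length_le fun h => hne (hy.eq_of_length h)
    refine hwin s d hd (Nat.lt_of_mul_lt_mul_left (a := k) (by omega)) (by omega) fun i hi => ?_
    rw [List.hasPeriod_iff_getElem?] at hyper
    dsimp only
    have hys' : ∀ i < y.length, w[s + i]? = y[i]? := fun i hi => by
      rw [add_comm, hys i hi, List.getElem?_eq_getElem]
    rw [add_assoc, hys' _ (by omega), hys' _ (by omega), hyper i (by omega)]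

theorem simpleKPower_of_kPowerFreeBelow {k q : ℕ} {w : List α} {f : ℕ → Option α}
    (hk : 0 < k) (hq : 0 < q) (hf : Periodic f q) (hlen : w.length = k * q)
    (hwf : ∀ i < w.length, w[i]? = f i) (hfree : KPowerFreeBelow k q f) : SimpleKPower k w := by
  refine (simpleKPower_iff hk hq hlen).2 ⟨List.hasPeriod_iff_forall_getElem?_mod.2 fun i hi => ?_,
    fun s d hd hdq hfit hper => hfree s d hd hdq (hper.congr fun i hi => hwf _ (by omega))⟩
  have : i % q < w.length := (Nat.mod_lt _ hq).trans_le (hlen ▸ Nat.le_mul_of_pos_left _ hk)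
  rw [hwf i hi, hwf _ this, hf.map_mod_nat]

theorem SimpleKPower.kPowerFreeBelow {k q : ℕ} {w : List α} (hk : 2 ≤ k) (hw : SimpleKPower k w)
    (hq : 0 < q) (hlen : w.length = k * q) : KPowerFreeBelow k q (fun x => w[x % q]?) := by
  obtain ⟨hper, hwin⟩ := (simpleKPower_iff (by omega) hq hlen).1 hw
  refine kPowerFreeBelow_of_window hk (fun x => by simp) fun s d hd hdq hfit hP =>
    hwin s d hd hdq hfit (hP.congr fun i hi => hper.getElem?_mod q _ _ (by omega))

/-- With `f x = w_i[x mod |p|]?` for `w_i = p ^ k`, `m = |w_i|` and `δ = n ^ (i - 1)`, the word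
`w_{i+1}` is the prefix of length `n * m` of `blockWord f A m δ`, whose block `j` is
`cyc (j * δ) w_i` followed by `A`. -/
def blockWord (f : ℕ → Option α) (A : α) (m δ : ℕ) (x : ℕ) : Option α :=
  if x % m = m - 1 then some A else f (x % m + x / m * δ)

section blockWord

variable {f : ℕ → Option α} {A : α} {m δ : ℕ}

theorem blockWord_mul_add {j l : ℕ} (hl : l < m - 1) :
    blockWord f A m δ (j * m + l) = f (l + j * δ) := by
  have hm : 0 < m := by omega
  rw [blockWord, Nat.mul_add_mod', Nat.mod_eq_of_lt (by omega), if_neg (by omega),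
    mul_comm j, Nat.mul_add_div hm, Nat.div_eq_of_lt (by omega), add_zero]

theorem blockWord_eq_some_iff (hA : ∀ x, f x ≠ some A) {x : ℕ} :
    blockWord f A m δ x = some A ↔ x % m = m - 1 := by
  unfold blockWord
  split_ifs with h <;> simp [h, hA]

theorem periodic_blockWord {q t : ℕ} (hf : Periodic f q) (hq : q = t * δ) :
    Periodic (blockWord f A m δ) (t * m) := by
  intro x
  rcases Nat.eq_zero_or_pos m with rfl | hm
  · simp
  rw [blockWord, blockWord, Nat.add_mul_mod_self_right, Nat.add_mul_div_right _ _ hm, add_mul,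
    ← hq, ← add_assoc, hf]

theorem dvd_of_periodicOn_blockWord (hA : ∀ x, f x ≠ some A) {k d s x : ℕ} (hk : 2 ≤ k)
    (hper : PeriodicOn (blockWord f A m δ) d s (k * d)) (hsx : s ≤ x) (hx : x < s + k * d)
    (hxm : x % m = m - 1) : m ∣ d := by
  have h2d : 2 * d ≤ k * d := Nat.mul_le_mul_right _ hk
  obtain ⟨y, hsy, hy, hym⟩ :
      ∃ y, s ≤ y ∧ y + d < s + k * d ∧ (y % m = m - 1 ∨ (y + d) % m = m - 1) := by
    by_cases hxd : x + d < s + k * d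
    · exact ⟨x, hsx, hxd, .inl hxm⟩
    · exact ⟨x - d, by omega, by omega, .inr (by rwa [Nat.sub_add_cancel (by omega)])⟩
  have hstep := hper (y - s) (by omega)
  rw [Nat.add_sub_cancel' hsy] at hstep
  have hmod : y % m = m - 1 ∧ (y + d) % m = m - 1 := by
    simp only [← blockWord_eq_some_iff (δ := δ) hA, hstep] at hym ⊢
    exact ⟨hym.elim id id, hym.elim id id⟩
  simpa using (Nat.modEq_iff_dvd' (Nat.le_add_right y d)).1 (hmod.1.trans hmod.2.symm)

theorem periodic_of_periodicOn_blockWord {q k c s : ℕ} (hf : Periodic f q) (hq : 0 < q)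
    (hk : 2 ≤ k) (hqm : 2 * q ≤ m) (hc : 0 < c)
    (hper : PeriodicOn (blockWord f A m δ) (m * c) s (k * (m * c))) : Periodic f (c * δ) := by
  obtain ⟨j, l₀, hrun, hlow, hhigh⟩ :
      ∃ j l₀, l₀ + q ≤ m - 1 ∧ s ≤ j * m + l₀ ∧ j * m + l₀ + q ≤ s + m := by
    have hs := Nat.div_add_mod' s m
    have hsm := Nat.mod_lt s (show 0 < m by omega)
    by_cases h : s % m + q ≤ m - 1
    · exact ⟨s / m, s % m, h, by omega, by omega⟩
    · exact ⟨s / m + 1, 0, by omega, by rw [add_one_mul]; omega, by rw [add_one_mul]; omega⟩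
  have hmc : m ≤ m * c ∧ 2 * (m * c) ≤ k * (m * c) :=
    ⟨Nat.le_mul_of_pos_right _ hc, Nat.mul_le_mul_right _ hk⟩
  refine hf.of_forall_lt hq (a := l₀ + j * δ) fun i hi => ?_
  have hstep := hper (j * m + l₀ + i - s) (by omega)
  rw [show s + (j * m + l₀ + i - s) = j * m + (l₀ + i) by omega,
    show j * m + (l₀ + i) + m * c = (j + c) * m + (l₀ + i) by ring,
    blockWord_mul_add (by omega), blockWord_mul_add (by omega)] at hstep
  convert hstep using 2 <;> ring

theorem periodicOn_of_periodicOn_blockWord {d s len : ℕ} (hm : 0 < m)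
    (hnoA : ∀ x, s ≤ x → x < s + len → x % m ≠ m - 1)
    (hper : PeriodicOn (blockWord f A m δ) d s len) :
    s % m + len ≤ m - 1 ∧ PeriodicOn f d (s % m + s / m * δ) len := by
  have hs := Nat.div_add_mod' s m
  have hsm := Nat.mod_lt s hm
  have hfit : s % m + len ≤ m - 1 := by
    by_contra h
    refine hnoA (s / m * m + (m - 1)) (by omega) (by omega) ?_
    rw [Nat.mul_add_mod', Nat.mod_eq_of_lt (by omega)]
  refine ⟨hfit, fun i hi => ?_⟩
  have hstep := hper i hi
  rw [show s + i + d = s / m * m + (s % m + i + d) by omega,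
    show s + i = s / m * m + (s % m + i) by omega,
    blockWord_mul_add (by omega), blockWord_mul_add (by omega)] at hstep
  convert hstep using 2 <;> omega

theorem kPowerFreeBelow_blockWord {k q t : ℕ} (hk : 2 ≤ k) (hf : Periodic f q)
    (hfree : KPowerFreeBelow k q f) (hA : ∀ x, f x ≠ some A) (hm : m = k * q) (hq : q = t * δ) :
    KPowerFreeBelow k (t * m) (blockWord f A m δ) := by
  intro s d hd hdt hper
  have hm0 : 0 < m := Nat.pos_of_mul_pos_left (a := t) (by omega)
  have hq0 : 0 < q := Nat.pos_of_mul_pos_left (a := k) (by omega)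
  by_cases hAwin : ∃ x, s ≤ x ∧ x < s + k * d ∧ x % m = m - 1
  · obtain ⟨x, hsx, hx, hxm⟩ := hAwin
    obtain ⟨c, rfl⟩ := dvd_of_periodicOn_blockWord hA hk hper hsx hx hxm
    have hc : 0 < c := Nat.pos_of_mul_pos_left (a := m) hd
    have hct : c < t := Nat.lt_of_mul_lt_mul_left (a := m) (by rwa [mul_comm m t])
    have hδ : 0 < δ := Nat.pos_of_mul_pos_left (a := t) (hq ▸ hq0)
    refine hfree.not_periodic hf (Nat.mul_pos hc hδ) (hq ▸ Nat.mul_lt_mul_of_pos_right hct hδ)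
      (periodic_of_periodicOn_blockWord hf hq0 hk ?_ hc hper)
    rw [hm]
    exact Nat.mul_le_mul_right _ hk
  · push Not at hAwin
    obtain ⟨hfit, hperF⟩ := periodicOn_of_periodicOn_blockWord hm0 hAwin hper
    exact hfree _ d hd (Nat.lt_of_mul_lt_mul_left (a := k) (by omega)) hperF

end blockWord

theorem getElem?_flatten_cyc {w : List α} {q n δ : ℕ} {A : α} (hq : q ∣ w.length)
    (hper : w.HasPeriod q) {x : ℕ} (hx : x < n * w.length) :
    (List.ofFn fun j : Fin n => cyc (j * δ) w ++ [A]).flatten[x]? =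
      blockWord (fun y => w[y % q]?) A w.length δ x := by
  have hm : 0 < w.length := Nat.pos_of_mul_pos_left (a := n) (by omega)
  have hxm := Nat.mod_lt x hm
  have hB : ∀ j : Fin n, (cyc (j * δ) w ++ [A]).length = w.length := fun j => by
    rw [List.length_append, length_cyc, List.length_singleton]; omega
  rw [List.getElem?_flatten_ofFn hB hx, blockWord]
  split_ifs with h
  · rw [List.getElem?_append_right (by rw [length_cyc]; omega), length_cyc, h, Nat.sub_self]
    rfl
  · rw [List.getElem?_append_left (by rw [length_cyc]; omega), getElem?_cyc _ _ (by omega),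
      ← hper.getElem?_mod q _ _ (Nat.mod_lt _ hm), Nat.mod_mod_of_dvd _ hq]

theorem SimpleKPower.flatten_cyc {k n t δ : ℕ} {w : List α} {A : α} (hk : 2 ≤ k)
    (hw : SimpleKPower k w) (hn : n = k * t) (hm : w.length = n * δ) (hA : A ∉ w) :
    SimpleKPower k (List.ofFn fun j : Fin n => cyc (j * δ) w ++ [A]).flatten := by
  obtain ⟨q, hq, hlen, hper⟩ := (isKPower_iff (by omega)).1 hw.1
  have hqt : q = t * δ := Nat.eq_of_mul_eq_mul_left (show 0 < k by omega) (by
    rw [← hlen, hm, hn, mul_assoc])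
  have hm0 : 0 < w.length := by rw [hlen]; exact Nat.mul_pos (by omega) hq
  have hB : ∀ j : Fin n, (cyc (j * δ) w ++ [A]).length = w.length := fun j => by
    rw [List.length_append, length_cyc, List.length_singleton]; omega
  have hqdvd : q ∣ w.length := ⟨k, by rw [hlen, mul_comm]⟩
  refine simpleKPower_of_kPowerFreeBelow (q := t * w.length) (by omega)
    (Nat.mul_pos (Nat.pos_of_mul_pos_right (hqt ▸ hq)) (by omega))
    (periodic_blockWord (fun x => by simp) hqt) ?_
    (fun x hx => getElem?_flatten_cyc hqdvd hper (by rwa [List.length_flatten_ofFn hB] at hx))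
    (kPowerFreeBelow_blockWord hk (fun x => by simp) (hw.kPowerFreeBelow hk hq hlen)
      (fun x hx => hA (List.mem_of_getElem? hx)) hlen hqt)
  rw [List.length_flatten_ofFn hB, hn, mul_assoc]

theorem length_wrec {w1 : List α} {a : ℕ → α} {n : ℕ} (hn : w1.length = n) (i : ℕ) :
    (wrec w1 a n i).length = n ^ (i + 1) := by
  induction i with
  | zero => simpa [wrec] using hn
  | succ i ih =>
    have hB : ∀ j : Fin n, (cyc (j * n ^ i) (wrec w1 a n i) ++ [a (i + 1)]).length = n ^ (i + 1) :=
      fun j => by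
        have := pow_pos j.pos (i + 1)
        rw [List.length_append, length_cyc, ih, List.length_singleton]; omega
    rw [wrec, List.length_flatten_ofFn hB, pow_succ' n (i + 1)]

end

/-- Every word `w_i` of the recursive construction is a simple `k`-power. -/
theorem wrec_simpleKPower {α : Type*} (k : ℕ) (hk : 2 ≤ k) (w1 : List α) (a : ℕ → α) (n : ℕ)
    (hw1 : SimpleKPower k w1) (hn : w1.length = n)
    (hfresh : ∀ i : ℕ, a (i + 1) ∉ wrec w1 a n i) :
    ∀ i : ℕ, SimpleKPower k (wrec w1 a n i) := by
  obtain ⟨p, -, hw1p⟩ := hw1.1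
  have hnk : n = k * p.length := by rw [← hn, hw1p, length_listPow]
  intro i
  induction i with
  | zero => exact hw1
  | succ i ih => exact ih.flatten_cyc hk hnk (by rw [length_wrec hn, pow_succ']) (hfresh i)
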